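/- Correctness of epoch-based day arithmetic: for every valid date D and every integer n, toΔ(D +D n) = toΔ(D) + n. -/

import Mathlib

/-- A date is a triple of integers (year, month, day). -/
structure Date where
  y : ℤ
  m : ℤ
  d : ℤ

/-- A year is a leap year iff divisible by 4 and (not by 100, or by 400). -/
def isLeap (y : ℤ) : Prop :=
  y % 4 = 0 ∧ (y % 100 ≠ 0 ∨ y % 400 = 0)

/-- Number of days in month `m` of year `y`. -/
def nbdays (y m : ℤ) : ℤ :=
  if m = 4 ∨ m = 6 ∨ m = 9 ∨ m = 11 then 30
  else if m = 2 then
    (if y % 4 = 0 ∧ (y % 100 ≠ 0 ∨ y % 400 = 0) then 29 else 28)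
  else 31

/-- A date is valid iff `1 ≤ m ≤ 12` and `1 ≤ d ≤ nbdays y m`. -/
def Date.valid (D : Date) : Prop :=
  1 ≤ D.m ∧ D.m ≤ 12 ∧ 1 ≤ D.d ∧ D.d ≤ nbdays D.y D.m

/-- Month addition `(y, m, d) +m n`, with round-down of the day component. -/
def addMonths (D : Date) (n : ℤ) : Date :=
  ⟨D.y + (D.m - 1 + n) / 12,
   1 + (D.m - 1 + n) % 12,
   min D.d (nbdays (D.y + (D.m - 1 + n) / 12) (1 + (D.m - 1 + n) % 12))⟩

/-- A configuration of the small-step day-addition machine: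
either a pending addition `D +D n`, or a finished date. -/
inductive Conf where
  | pending (D : Date) (n : ℤ)
  | done (D : Date)

/-- Small-step rules for day addition `+D`. -/
inductive Step : Conf → Conf → Prop where
  | add_days {y m d n : ℤ}
      (h1 : 1 ≤ d + n) (h2 : d + n ≤ nbdays y m) :
      Step (Conf.pending ⟨y, m, d⟩ n) (Conf.done ⟨y, m, d + n⟩)
  | add_days_over {y m d n : ℤ}
      (h : d + n > nbdays y m) :
      Step (Conf.pending ⟨y, m, d⟩ n)
        (Conf.pending (addMonths ⟨y, m, 1⟩ 1) (n - (nbdays y m - d) - 1))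
  | add_days_under1 {y m d n : ℤ}
      (h1 : 1 < d) (h2 : d + n ≤ 0) :
      Step (Conf.pending ⟨y, m, d⟩ n) (Conf.pending ⟨y, m, 1⟩ (d - 1 + n))
  | add_days_under2 {y m n y' m' : ℤ}
      (h1 : 1 + n ≤ 0) (h2 : addMonths ⟨y, m, 1⟩ (-1) = ⟨y', m', 1⟩) :
      Step (Conf.pending ⟨y, m, 1⟩ n) (Conf.pending ⟨y', m', 1⟩ (n + nbdays y' m'))

/-- Reduction in finitely many steps. -/
def Reduces : Conf → Conf → Prop := Relation.ReflTransGen Step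

instance : Nonempty Date := ⟨⟨2000, 3, 1⟩⟩

/-- `addDays D n` is the unique valid normal form of `D +D n`
(when it exists; arbitrary otherwise). -/
noncomputable def addDays (D : Date) (n : ℤ) : Date :=
  Classical.epsilon fun D' : Date =>
    D'.valid ∧ Reduces (Conf.pending D n) (Conf.done D')

/-- Date-period addition `D +P (ny, nm, nd) = (D +m (12·ny + nm)) +D nd`. -/
noncomputable def addPeriod (D : Date) (P : ℤ × ℤ × ℤ) : Date :=
  addDays (addMonths D (12 * P.1 + P.2.1)) P.2.2

/-- Lexicographic order on dates. -/
def Date.le (a b : Date) : Prop :=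
  a.y < b.y ∨ (a.y = b.y ∧ a.m < b.m) ∨ (a.y = b.y ∧ a.m = b.m ∧ a.d ≤ b.d)

/-- Strict lexicographic order on dates. -/
def Date.lt (a b : Date) : Prop :=
  a.y < b.y ∨ (a.y = b.y ∧ a.m < b.m) ∨ (a.y = b.y ∧ a.m = b.m ∧ a.d < b.d)

/-- The epoch date: March 1, 2000. -/
def epoch : Date := ⟨2000, 3, 1⟩

/-- `toDelta D` is the unique integer `n` with `epoch +D n = D`
(when it exists; arbitrary otherwise). -/
noncomputable def toDelta (D : Date) : ℤ :=
  Classical.epsilon fun n : ℤ => addDays epoch n = D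

/-!
Give every date the day number `monthStart (12 y + m - 1) + d`, where `monthStart` is a closed
Gregorian day count. Reading a pending configuration `D +D n` as `dayNumber D + n`, every small
step preserves this value, so `dayNumber (D +D n) = dayNumber D + n`. Consecutive months fill
consecutive disjoint blocks of day numbers, so the day number is injective on valid dates; hence
`toΔ D = dayNumber D - dayNumber epoch`, and the theorem is the invariance identity.
-/

theorem nbdays_pos (y m : ℤ) : 0 < nbdays y m := by
  unfold nbdays; split_ifs <;> norm_num

theorem nbdays_le_31 (y m : ℤ) : nbdays y m ≤ 31 := by
  unfold nbdays; split_ifs <;> norm_num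

/-- Number of days from 1 March of year 0 to the first day of the month with index
`i = 12 y + m - 1`. Counting in years that start in March puts the leap day last:
`(153 M + 2) / 5` days precede the `M`-th month of such a year. -/
def monthStart (i : ℤ) : ℤ :=
  let Y := (i - 2) / 12
  let M := (i - 2) % 12
  365 * Y + Y / 4 - Y / 100 + Y / 400 + (153 * M + 2) / 5

theorem monthStart_add_nbdays {y m : ℤ} (h1 : 1 ≤ m) (h12 : m ≤ 12) :
    monthStart (12 * y + m - 1) + nbdays y m = monthStart (12 * y + m) := by
  interval_cases m <;> simp only [monthStart, nbdays] <;> norm_num <;> (try split_ifs) <;> omega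

theorem monthStart_strictMono : StrictMono monthStart := by
  refine strictMono_int_of_lt_succ fun i => ?_
  have h := monthStart_add_nbdays (y := i / 12) (m := i % 12 + 1) (by omega) (by omega)
  rw [show 12 * (i / 12) + (i % 12 + 1) - 1 = i by omega,
    show 12 * (i / 12) + (i % 12 + 1) = i + 1 by omega] at h
  linarith [nbdays_pos (i / 12) (i % 12 + 1)]

def Date.monthIndex (D : Date) : ℤ := 12 * D.y + D.m - 1

def Date.dayNumber (D : Date) : ℤ := monthStart D.monthIndex + D.d

theorem monthIndex_addMonths (D : Date) (n : ℤ) :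
    (addMonths D n).monthIndex = D.monthIndex + n := by
  simp only [addMonths, Date.monthIndex]; omega

theorem valid_addMonths {D : Date} (hd : 1 ≤ D.d) (n : ℤ) : (addMonths D n).valid := by
  have := nbdays_pos (D.y + (D.m - 1 + n) / 12) (1 + (D.m - 1 + n) % 12)
  refine ⟨by simp only [addMonths]; omega, by simp only [addMonths]; omega, ?_, min_le_right _ _⟩
  exact le_min hd (by omega)

theorem addMonths_first_day (y m n : ℤ) :
    addMonths ⟨y, m, 1⟩ n = ⟨y + (m - 1 + n) / 12, 1 + (m - 1 + n) % 12, 1⟩ := by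
  simp only [addMonths, Date.mk.injEq, true_and]
  exact min_eq_left (nbdays_pos _ _)

theorem Date.dayNumber_injOn : Set.InjOn Date.dayNumber {D | D.valid} := by
  have bounds : ∀ D : Date, D.valid →
      D.dayNumber ∈ Set.Ioc (monthStart D.monthIndex) (monthStart (D.monthIndex + 1)) := by
    rintro ⟨y, m, d⟩ ⟨hm1, hm12, hd1, hdn⟩
    have := monthStart_add_nbdays (y := y) hm1 hm12
    simp only [Date.dayNumber, Date.monthIndex, Set.mem_Ioc] at this hd1 hdn ⊢
    rw [sub_add_cancel]
    omega
  rintro ⟨y, m, d⟩ hD ⟨y', m', d'⟩ hD' h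
  have hidx : Date.monthIndex ⟨y, m, d⟩ = Date.monthIndex ⟨y', m', d'⟩ := by
    by_contra hne
    have hdisj := monthStart_strictMono.monotone.pairwise_disjoint_on_Ioc_succ hne
    simp only [Function.onFun, Order.succ_eq_add_one] at hdisj
    exact Set.disjoint_left.mp hdisj (bounds _ hD) (h ▸ bounds _ hD')
  obtain ⟨hm1, hm12, -⟩ := hD
  obtain ⟨hm1', hm12', -⟩ := hD'
  simp only [Date.monthIndex] at hidx hm1 hm12 hm1' hm12'
  obtain ⟨rfl, rfl⟩ : y = y' ∧ m = m' := by omega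
  simpa [Date.dayNumber, Date.monthIndex] using h

def Conf.MonthInRange : Conf → Prop
  | .pending D _ => 1 ≤ D.m ∧ D.m ≤ 12
  | .done _ => True

def Conf.dayNumber : Conf → ℤ
  | .pending D n => D.dayNumber + n
  | .done D => D.dayNumber

namespace Step

variable {c c' : Conf}

theorem monthInRange (h : Step c c') (hc : c.MonthInRange) : c'.MonthInRange := by
  cases h with
  | add_days => trivial
  | add_days_over =>
    exact (valid_addMonths le_rfl 1).imp_right fun h => h.1
  | add_days_under1 => exact hc
  | add_days_under2 _ hprev =>
    exact hprev ▸ (valid_addMonths le_rfl (-1)).imp_right fun h => h.1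

theorem dayNumber_eq (h : Step c c') (hc : c.MonthInRange) : c'.dayNumber = c.dayNumber := by
  cases h with
  | @add_days y m d n =>
    simp only [Conf.dayNumber, Date.dayNumber, Date.monthIndex]; ring
  | @add_days_over y m d n =>
    obtain ⟨hm1, hm12⟩ := hc
    have hidx := monthIndex_addMonths ⟨y, m, 1⟩ 1
    have hnext := monthStart_add_nbdays (y := y) hm1 hm12
    rw [addMonths_first_day] at hidx ⊢
    simp only [Conf.dayNumber, Date.dayNumber, Date.monthIndex] at hidx ⊢
    rw [hidx, sub_add_cancel, ← hnext]
    ring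
  | add_days_under1 =>
    simp only [Conf.dayNumber, Date.dayNumber, Date.monthIndex]; ring
  | @add_days_under2 y m n y' m' _ hprev =>
    obtain ⟨hm1, hm12, -⟩ := hprev ▸ valid_addMonths (D := ⟨y, m, 1⟩) le_rfl (-1)
    have hidx := hprev ▸ monthIndex_addMonths ⟨y, m, 1⟩ (-1)
    have hnext := monthStart_add_nbdays (y := y') hm1 hm12
    simp only [Conf.dayNumber, Date.dayNumber, Date.monthIndex] at hidx hnext ⊢
    rw [show 12 * y + m - 1 = 12 * y' + m' by omega, ← hnext]
    ring

end Step

namespace Reduces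

variable {c c' : Conf}

theorem monthInRange (h : Reduces c c') (hc : c.MonthInRange) : c'.MonthInRange := by
  induction h with
  | refl => exact hc
  | tail _ hstep ih => exact hstep.monthInRange ih

theorem dayNumber_eq (h : Reduces c c') (hc : c.MonthInRange) : c'.dayNumber = c.dayNumber := by
  induction h with
  | refl => rfl
  | tail hred hstep ih => rw [hstep.dayNumber_eq (monthInRange hred hc), ih]

end Reduces

/-- Decreases along every step: going back over a month may leave a nonnegative remainder,
but one of less than 31 days. -/
def stepMeasure (n : ℤ) : ℕ := if n < 0 then (31 - n).toNat else n.toNat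

theorem exists_step {D : Date} (hD : D.valid) (n : ℤ) :
    (∃ E : Date, E.valid ∧ Step (.pending D n) (.done E)) ∨
      ∃ (D' : Date) (n' : ℤ), D'.valid ∧ Step (.pending D n) (.pending D' n') ∧
        stepMeasure n' < stepMeasure n := by
  obtain ⟨y, m, d⟩ := D
  obtain ⟨hm1, hm12, hd1, hdn⟩ := hD
  dsimp only at hm1 hm12 hd1 hdn
  have hnb := nbdays_le_31 y m
  by_cases hover : d + n > nbdays y m
  · refine .inr ⟨_, _, valid_addMonths le_rfl 1, .add_days_over hover, ?_⟩
    simp only [stepMeasure]; split_ifs <;> omega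
  by_cases hin : 1 ≤ d + n
  · exact .inl ⟨_, ⟨hm1, hm12, hin, not_lt.mp hover⟩, .add_days hin (not_lt.mp hover)⟩
  by_cases hd : 1 < d
  · refine .inr ⟨⟨y, m, 1⟩, _, ⟨hm1, hm12, le_rfl, by linarith [nbdays_pos y m]⟩,
      .add_days_under1 hd (by omega), ?_⟩
    simp only [stepMeasure]; split_ifs <;> omega
  obtain rfl : d = 1 := by omega
  have hprev := addMonths_first_day y m (-1)
  refine .inr ⟨_, _, hprev ▸ valid_addMonths le_rfl (-1), .add_days_under2 (by omega) hprev, ?_⟩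
  have := nbdays_pos (y + (m - 1 + -1) / 12) (1 + (m - 1 + -1) % 12)
  have := nbdays_le_31 (y + (m - 1 + -1) / 12) (1 + (m - 1 + -1) % 12)
  simp only [stepMeasure]; split_ifs <;> omega

theorem exists_reduces_done {D : Date} (hD : D.valid) (n : ℤ) :
    ∃ E : Date, E.valid ∧ Reduces (.pending D n) (.done E) := by
  rcases exists_step hD n with ⟨E, hE, hstep⟩ | ⟨D', n', hD', hstep, hlt⟩
  · exact ⟨E, hE, .single hstep⟩
  · obtain ⟨E, hE, hred⟩ := exists_reduces_done hD' n'
    exact ⟨E, hE, .head hstep hred⟩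
termination_by stepMeasure n

theorem addDays_spec {D : Date} (hD : D.valid) (n : ℤ) :
    (addDays D n).valid ∧ Reduces (.pending D n) (.done (addDays D n)) :=
  Classical.epsilon_spec (exists_reduces_done hD n)

theorem dayNumber_addDays {D : Date} (hD : D.valid) (n : ℤ) :
    (addDays D n).dayNumber = D.dayNumber + n :=
  (addDays_spec hD n).2.dayNumber_eq ⟨hD.1, hD.2.1⟩

theorem epoch_valid : epoch.valid := by
  norm_num [epoch, Date.valid, nbdays]

theorem toDelta_eq_dayNumber_sub {D : Date} (hD : D.valid) :
    toDelta D = D.dayNumber - epoch.dayNumber := by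
  have hsurj : ∃ k, addDays epoch k = D := by
    refine ⟨D.dayNumber - epoch.dayNumber,
      Date.dayNumber_injOn (addDays_spec epoch_valid _).1 hD ?_⟩
    rw [dayNumber_addDays epoch_valid]
    ring
  have hspec : addDays epoch (toDelta D) = D := Classical.epsilon_spec hsurj
  have hday := dayNumber_addDays epoch_valid (toDelta D)
  rw [hspec] at hday
  linarith

/-- **Correctness of epoch-based day arithmetic**: for every valid date `D` and every
integer `n`, `toΔ(D +D n) = toΔ(D) + n`. -/
theorem toDelta_addDays (D : Date) (hD : D.valid) (n : ℤ) :
    toDelta (addDays D n) = toDelta D + n := by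
  rw [toDelta_eq_dayNumber_sub (addDays_spec hD n).1, toDelta_eq_dayNumber_sub hD,
    dayNumber_addDays hD]
  ring
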